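/- arXiv:1304.6459 — 3 statements merged into one kernel-verified Lean document; each statement's English description precedes it below -/
import Mathlib

section
/- For every real number β ≥ 0, the mean distance from the origin under the population-distance-based density, namely E_n(β) := Φ(β, n)·∫_{B_n} |x|·(1 + |x|²)^{−β} dx, satisfies: E_n(β) = Θ(1) if β > 3/2; E_n(β) = Θ(log n) if β = 3/2; E_n(β) = Θ(n^{3/2−β}) if 1 < β < 3/2; E_n(β) = Θ(√n / log n) if β = 1; and E_n(β) = Θ(√n) if 0 ≤ β < 1. -/
open MeasureTheory

/-- `f(n) = Θ(h(n))`: there exist constants `0 < c₁ ≤ c₂` and `N₀` such that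
`c₁·h(n) ≤ f(n) ≤ c₂·h(n)` for all integers `n ≥ N₀`. -/
def IsBigTheta (f h : ℕ → ℝ) : Prop :=
  ∃ c₁ c₂ : ℝ, 0 < c₁ ∧ c₁ ≤ c₂ ∧ ∃ N₀ : ℕ, ∀ n : ℕ, N₀ ≤ n →
    c₁ * h n ≤ f n ∧ f n ≤ c₂ * h n

/-- The closed disk `B_n = {x ∈ ℝ² : |x| ≤ √n}`. -/
noncomputable def diskB (n : ℕ) : Set (EuclideanSpace ℝ (Fin 2)) :=
  Metric.closedBall 0 (Real.sqrt n)

/-- Normalization constant `Φ(β, n) = (∫_{B_n} (1 + |x|²)^{−β} dx)⁻¹`. -/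
noncomputable def Phi (β : ℝ) (n : ℕ) : ℝ :=
  (∫ x in diskB n, (1 + ‖x‖ ^ 2) ^ (-β))⁻¹

/-- Mean distance from the origin under the population-distance-based density:
`E_n(β) = Φ(β, n)·∫_{B_n} |x|·(1 + |x|²)^{−β} dx`. -/
noncomputable def meanDist (β : ℝ) (n : ℕ) : ℝ :=
  Phi β n * ∫ x in diskB n, ‖x‖ * (1 + ‖x‖ ^ 2) ^ (-β)

/-!
In polar coordinates both integrals defining `meanDist β n` become radial moments
`K_a(R) = ∫₀ᴿ r^a (1 + r²)^(-β) dr` at `R = √n`, so `meanDist β n = K₂(√n) / K₁(√n)`.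
Since `max(1, r)² ≤ 1 + r² ≤ 2 max(1, r)²`, the moment `K_a(R)` lies within a factor `2^β` of
`1/(a+1) + ∫₁ᴿ r^(a-2β) dr`, which is of order `1`, `log R` or `R^(a+1-2β)` according as
`a - 2β` is `< -1`, `= -1` or `> -1`. The five regimes of `β` are the combinations of these
orders for `a = 1` and `a = 2`.
-/

open Set Filter Asymptotics Metric Real Topology

theorem integral_closedBall_comp_norm {E : Type*} [NormedAddCommGroup E] [NormedSpace ℝ E]
    [Nontrivial E] [FiniteDimensional ℝ E] [MeasurableSpace E] [BorelSpace E] (μ : Measure E)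
    [μ.IsAddHaarMeasure] (f : ℝ → ℝ) {R : ℝ} (hR : 0 ≤ R) :
    ∫ x in closedBall (0 : E) R, f ‖x‖ ∂μ =
      Module.finrank ℝ E * μ.real (ball 0 1) *
        ∫ r in (0)..R, r ^ (Module.finrank ℝ E - 1) * f r := by
  have hball : closedBall (0 : E) R = norm ⁻¹' Iic R := by
    ext x; simp
  rw [← integral_indicator measurableSet_closedBall, hball]
  have hind : (norm ⁻¹' Iic R).indicator (fun x : E ↦ f ‖x‖) = fun x ↦ (Iic R).indicator f ‖x‖ :=
    funext fun x ↦ indicator_comp_right (g := f) (‖·‖) (x := x)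
  have hmul : (fun y : ℝ ↦ y ^ (Module.finrank ℝ E - 1) • (Iic R).indicator f y) =
      (Iic R).indicator fun y ↦ y ^ (Module.finrank ℝ E - 1) * f y := by
    ext y; by_cases hy : y ∈ Iic R <;> simp [hy]
  rw [hind, integral_fun_norm_addHaar μ ((Iic R).indicator f), hmul,
    setIntegral_indicator measurableSet_Iic, Ioi_inter_Iic, intervalIntegral.integral_of_le hR,
    nsmul_eq_mul, smul_eq_mul, mul_assoc]

noncomputable def radialMoment (β : ℝ) (a : ℕ) (R : ℝ) : ℝ :=
  ∫ r in (0)..R, r ^ a * (1 + r ^ 2) ^ (-β)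

theorem meanDist_eq_radialMoment_div (β : ℝ) (n : ℕ) :
    meanDist β n = radialMoment β 2 √n / radialMoment β 1 √n := by
  have polar := fun f ↦ integral_closedBall_comp_norm
    (volume : Measure (EuclideanSpace ℝ (Fin 2))) f (sqrt_nonneg n)
  simp only [finrank_euclideanSpace_fin, Nat.cast_ofNat, Nat.add_one_sub_one, pow_one] at polar
  set c := (2 : ℝ) * volume.real (ball (0 : EuclideanSpace ℝ (Fin 2)) 1)
  have hc : c ≠ 0 :=
    mul_ne_zero two_ne_zero (ENNReal.toReal_pos (measure_ball_pos _ _ one_pos).ne'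
      measure_ball_lt_top.ne).ne'
  have hden : ∫ x in diskB n, (1 + ‖x‖ ^ 2) ^ (-β) = c * radialMoment β 1 √n := by
    rw [diskB, polar (fun r ↦ (1 + r ^ 2) ^ (-β)), radialMoment]
    simp only [pow_one]
  have hnum : ∫ x in diskB n, ‖x‖ * (1 + ‖x‖ ^ 2) ^ (-β) = c * radialMoment β 2 √n := by
    rw [diskB, polar (fun r ↦ r * (1 + r ^ 2) ^ (-β)), radialMoment]
    simp only [← mul_assoc, ← pow_two]
  rw [meanDist, Phi, hden, hnum, mul_inv, div_eq_mul_inv]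
  field_simp

theorem isTheta_of_le_of_le {α : Type*} {l : Filter α} {f g : α → ℝ} {c₁ c₂ : ℝ} (hc₁ : 0 < c₁)
    (hg : ∀ᶠ x in l, 0 ≤ g x) (hfg : ∀ᶠ x in l, c₁ * g x ≤ f x ∧ f x ≤ c₂ * g x) :
    f =Θ[l] g := by
  refine ⟨.of_bound c₂ ?_, .of_bound c₁⁻¹ ?_⟩ <;> filter_upwards [hg, hfg] with x hgx ⟨hlo, hhi⟩
  · have : 0 ≤ f x := (mul_nonneg hc₁.le hgx).trans hlo
    rwa [norm_of_nonneg this, norm_of_nonneg hgx]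
  · have : 0 ≤ f x := (mul_nonneg hc₁.le hgx).trans hlo
    rw [norm_of_nonneg this, norm_of_nonneg hgx, inv_mul_eq_div, le_div_iff₀' hc₁]
    exact hlo

section Comparison

variable {β : ℝ}

theorem max_one_rpow_neg_two_mul (r : ℝ) : max 1 r ^ (-2 * β) = (max 1 r ^ 2) ^ (-β) := by
  rw [← rpow_natCast, ← rpow_mul (zero_le_one.trans (le_max_left 1 r))]
  norm_num

theorem one_add_sq_rpow_neg_le (hβ : 0 ≤ β) (r : ℝ) :
    (1 + r ^ 2) ^ (-β) ≤ max 1 r ^ (-2 * β) := by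
  rw [max_one_rpow_neg_two_mul]
  refine rpow_le_rpow_of_nonpos (by positivity) ?_ (neg_nonpos.2 hβ)
  rcases le_total 1 r with h | h
  · rw [max_eq_right h]; linarith
  · rw [max_eq_left h]; nlinarith

theorem two_rpow_neg_mul_le_one_add_sq_rpow_neg (hβ : 0 ≤ β) {r : ℝ} (hr : 0 ≤ r) :
    2 ^ (-β) * max 1 r ^ (-2 * β) ≤ (1 + r ^ 2) ^ (-β) := by
  rw [max_one_rpow_neg_two_mul, ← mul_rpow zero_le_two (by positivity)]
  refine rpow_le_rpow_of_nonpos (by positivity) ?_ (neg_nonpos.2 hβ)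
  rcases le_total 1 r with h | h
  · rw [max_eq_right h]; nlinarith
  · rw [max_eq_left h]; nlinarith

theorem continuous_pow_mul_max_one_rpow (β : ℝ) (a : ℕ) :
    Continuous fun r : ℝ ↦ r ^ a * max 1 r ^ (-2 * β) :=
  (continuous_pow a).mul <| (continuous_const.max continuous_id).rpow_const
    fun r ↦ .inl (zero_lt_one.trans_le (le_max_left 1 r)).ne'

theorem continuous_pow_mul_one_add_sq_rpow (β : ℝ) (a : ℕ) :
    Continuous fun r : ℝ ↦ r ^ a * (1 + r ^ 2) ^ (-β) :=
  (continuous_pow a).mul <| (continuous_const.add (continuous_pow 2)).rpow_const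
    fun r ↦ .inl (by positivity : (1 : ℝ) + r ^ 2 ≠ 0)

theorem integral_pow_mul_max_one_rpow (β : ℝ) (a : ℕ) {R : ℝ} (hR : 1 ≤ R) :
    ∫ r in (0)..R, r ^ a * max 1 r ^ (-2 * β) =
      1 / (a + 1) + ∫ r in (1)..R, r ^ ((a : ℝ) - 2 * β) := by
  have hcont := continuous_pow_mul_max_one_rpow β a
  rw [← intervalIntegral.integral_add_adjacent_intervals (b := 1) (hcont.intervalIntegrable _ _)
    (hcont.intervalIntegrable _ _)]
  congr 1
  · rw [intervalIntegral.integral_congr (g := fun r ↦ r ^ a), integral_pow]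
    · simp
    · intro r hr
      rw [uIcc_of_le zero_le_one] at hr
      simp [max_eq_left hr.2]
  · refine intervalIntegral.integral_congr fun r hr ↦ ?_
    rw [uIcc_of_le hR] at hr
    have hr0 : 0 < r := zero_lt_one.trans_le hr.1
    simp only [max_eq_right hr.1, ← rpow_natCast, ← rpow_add hr0, sub_eq_add_neg, neg_mul]

theorem radialMoment_isTheta (hβ : 0 ≤ β) (a : ℕ) :
    radialMoment β a =Θ[atTop] fun R ↦ 1 / (a + 1) + ∫ r in (1)..R, r ^ ((a : ℝ) - 2 * β) := by
  refine isTheta_of_le_of_le (c₂ := 1) (rpow_pos_of_pos two_pos (-β)) ?_ ?_ <;>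
    filter_upwards [eventually_ge_atTop 1] with R hR <;>
    rw [← integral_pow_mul_max_one_rpow β a hR]
  · exact intervalIntegral.integral_nonneg (zero_le_one.trans hR) fun r hr ↦
      mul_nonneg (pow_nonneg hr.1 a) (rpow_nonneg (zero_le_one.trans (le_max_left 1 r)) _)
  have hw := (continuous_pow_mul_max_one_rpow β a).intervalIntegrable (μ := volume) 0 R
  have hK := (continuous_pow_mul_one_add_sq_rpow β a).intervalIntegrable (μ := volume) 0 R
  rw [radialMoment, one_mul, ← intervalIntegral.integral_const_mul]
  constructor
  · refine intervalIntegral.integral_mono_on (zero_le_one.trans hR) (hw.const_mul _) hK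
      fun r hr ↦ ?_
    rw [mul_left_comm]
    exact mul_le_mul_of_nonneg_left (two_rpow_neg_mul_le_one_add_sq_rpow_neg hβ hr.1)
      (pow_nonneg hr.1 a)
  · exact intervalIntegral.integral_mono_on (zero_le_one.trans hR) hK hw fun r hr ↦
      mul_le_mul_of_nonneg_left (one_add_sq_rpow_neg_le hβ r) (pow_nonneg hr.1 a)

end Comparison

section Tail

variable {c s : ℝ}

theorem isTheta_const_add_integral_rpow_of_lt_neg_one (hc : 0 ≤ c) (hs : s < -1) :
    (fun R ↦ c + ∫ r in (1)..R, r ^ s) =Θ[atTop] fun _ ↦ (1 : ℝ) := by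
  have hlim : Tendsto (fun R ↦ ∫ r in (1)..R, r ^ s) atTop (𝓝 (∫ r in Ioi 1, r ^ s)) :=
    intervalIntegral_tendsto_integral_Ioi 1 (integrableOn_Ioi_rpow_of_lt hs one_pos) tendsto_id
  have hpos : 0 < ∫ r in Ioi (1 : ℝ), r ^ s := by
    rw [integral_Ioi_rpow_of_lt hs one_pos, one_rpow, neg_div, neg_pos]
    exact div_neg_of_pos_of_neg one_pos (by linarith)
  have hne : c + ∫ r in Ioi (1 : ℝ), r ^ s ≠ 0 := by positivity
  exact ((isEquivalent_const_iff_tendsto hne).2 (tendsto_const_nhds.add hlim)).isTheta.trans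
    (isTheta_const_const hne one_ne_zero)

theorem isTheta_const_add_integral_rpow_of_eq_neg_one (hs : s = -1) :
    (fun R ↦ c + ∫ r in (1)..R, r ^ s) =Θ[atTop] log := by
  have hlog : (fun R ↦ c + ∫ r in (1)..R, r ^ s) =ᶠ[atTop] fun R ↦ c + log R := by
    filter_upwards [eventually_gt_atTop 0] with R hR
    simp only [hs, rpow_neg_one, integral_inv_of_pos one_pos hR, div_one]
  exact hlog.trans_isTheta (IsEquivalent.refl.const_add_of_norm_tendsto_atTop
    (tendsto_norm_atTop_atTop.comp tendsto_log_atTop)).isTheta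

theorem isTheta_const_add_integral_rpow_of_neg_one_lt (hs : -1 < s) :
    (fun R ↦ c + ∫ r in (1)..R, r ^ s) =Θ[atTop] fun R ↦ R ^ (s + 1) := by
  have hs' : 0 < s + 1 := by linarith
  have hint : (fun R ↦ c + ∫ r in (1)..R, r ^ s) =
      fun R ↦ (c - (s + 1)⁻¹) + (s + 1)⁻¹ * R ^ (s + 1) := by
    ext R
    rw [integral_rpow (.inl hs), one_rpow]
    ring
  rw [hint]
  refine (IsEquivalent.refl.const_add_of_norm_tendsto_atTop (tendsto_norm_atTop_atTop.comp
    ((tendsto_rpow_atTop hs').const_mul_atTop (inv_pos.2 hs')))).isTheta.trans ?_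
  exact (isTheta_refl _ _).const_mul_left (inv_ne_zero hs'.ne')

end Tail

theorem Asymptotics.IsTheta.isBigTheta {f g : ℕ → ℝ} (h : f =Θ[atTop] g) (hf : ∀ n, 0 ≤ f n)
    (hg : ∀ n, 0 ≤ g n) : IsBigTheta f g := by
  obtain ⟨C, hC, hfg⟩ := h.1.exists_pos
  obtain ⟨C', hC', hgf⟩ := h.2.exists_pos
  obtain ⟨N₀, hN₀⟩ := eventually_atTop.1 (hfg.bound.and hgf.bound)
  refine ⟨C'⁻¹, max C C'⁻¹, inv_pos.2 hC', le_max_right _ _, N₀, fun n hn ↦ ?_⟩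
  have ⟨hfn, hgn⟩ := hN₀ n hn
  rw [norm_of_nonneg (hf n), norm_of_nonneg (hg n)] at hfn hgn
  constructor
  · rwa [inv_mul_le_iff₀ hC']
  · exact hfn.trans (mul_le_mul_of_nonneg_right (le_max_left _ _) (hg n))

theorem meanDist_nonneg (β : ℝ) (n : ℕ) : 0 ≤ meanDist β n :=
  mul_nonneg (inv_nonneg.2 (integral_nonneg fun _ ↦ by positivity))
    (integral_nonneg fun _ ↦ by positivity)

theorem isBigTheta_meanDist {β : ℝ} (hβ : 0 ≤ β) {g₁ g₂ : ℝ → ℝ} {h : ℕ → ℝ} {k : ℝ}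
    (h₁ : (fun R ↦ 1 / 2 + ∫ r in (1)..R, r ^ (1 - 2 * β)) =Θ[atTop] g₁)
    (h₂ : (fun R ↦ 1 / 3 + ∫ r in (1)..R, r ^ (2 - 2 * β)) =Θ[atTop] g₂)
    (hk : k ≠ 0) (hg : ∀ n : ℕ, g₂ √n / g₁ √n = k * h n) (hh : ∀ n, 0 ≤ h n) :
    IsBigTheta (fun n ↦ meanDist β n) h := by
  have hK₁ : radialMoment β 1 =Θ[atTop] g₁ := by
    refine (radialMoment_isTheta hβ 1).trans ?_
    norm_num
    exact h₁
  have hK₂ : radialMoment β 2 =Θ[atTop] g₂ := by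
    refine (radialMoment_isTheta hβ 2).trans ?_
    norm_num
    exact h₂
  have hsqrt : Tendsto (fun n : ℕ ↦ √(n : ℝ)) atTop atTop :=
    tendsto_sqrt_atTop.comp tendsto_natCast_atTop_atTop
  have hratio : (fun n : ℕ ↦ meanDist β n) =Θ[atTop] fun n ↦ g₂ √n / g₁ √n := by
    simp only [meanDist_eq_radialMoment_div]
    exact ⟨(hK₂.div hK₁).1.comp_tendsto hsqrt, (hK₂.div hK₁).2.comp_tendsto hsqrt⟩
  refine IsTheta.isBigTheta ?_ (meanDist_nonneg β) hh
  exact (hratio.trans_eventuallyEq (.of_forall hg)).trans ((isTheta_refl h _).const_mul_left hk)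

theorem mean_distance_order (β : ℝ) (hβ : 0 ≤ β) :
    (3 / 2 < β → IsBigTheta (fun n => meanDist β n) (fun _ => 1)) ∧
    (β = 3 / 2 → IsBigTheta (fun n => meanDist β n) (fun n => Real.log n)) ∧
    (1 < β ∧ β < 3 / 2 →
      IsBigTheta (fun n => meanDist β n) (fun n => (n : ℝ) ^ (3 / 2 - β))) ∧
    (β = 1 → IsBigTheta (fun n => meanDist β n) (fun n => Real.sqrt n / Real.log n)) ∧
    (β < 1 → IsBigTheta (fun n => meanDist β n) (fun n => Real.sqrt n)) := by
  refine ⟨fun hβ' ↦ ?_, fun hβ' ↦ ?_, fun ⟨hβ₁, hβ₂⟩ ↦ ?_, fun hβ' ↦ ?_, fun hβ' ↦ ?_⟩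
  · exact isBigTheta_meanDist hβ
      (isTheta_const_add_integral_rpow_of_lt_neg_one (by norm_num) (by linarith))
      (isTheta_const_add_integral_rpow_of_lt_neg_one (by norm_num) (by linarith))
      one_ne_zero (fun _ ↦ by norm_num) fun _ ↦ zero_le_one
  · subst hβ'
    exact isBigTheta_meanDist hβ
      (isTheta_const_add_integral_rpow_of_lt_neg_one (by norm_num) (by norm_num))
      (isTheta_const_add_integral_rpow_of_eq_neg_one (by norm_num))
      (one_div_ne_zero two_ne_zero) (fun n ↦ by rw [log_sqrt n.cast_nonneg]; ring)
      log_natCast_nonneg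
  · refine isBigTheta_meanDist hβ
      (isTheta_const_add_integral_rpow_of_lt_neg_one (by norm_num) (by linarith))
      (isTheta_const_add_integral_rpow_of_neg_one_lt (by linarith))
      one_ne_zero (fun n ↦ ?_) fun n ↦ by positivity
    rw [sqrt_eq_rpow, ← rpow_mul n.cast_nonneg]
    ring_nf
  · subst hβ'
    refine isBigTheta_meanDist hβ
      (isTheta_const_add_integral_rpow_of_eq_neg_one (by norm_num))
      (isTheta_const_add_integral_rpow_of_neg_one_lt (by norm_num))
      two_ne_zero (fun n ↦ ?_) fun n ↦ div_nonneg (sqrt_nonneg _) (log_natCast_nonneg n)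
    rw [log_sqrt n.cast_nonneg]
    norm_num
    ring
  · refine isBigTheta_meanDist hβ
      (isTheta_const_add_integral_rpow_of_neg_one_lt (by linarith))
      (isTheta_const_add_integral_rpow_of_neg_one_lt (by linarith))
      one_ne_zero (fun n ↦ ?_) fun n ↦ sqrt_nonneg _
    have hexp : (2 - 2 * β + 1) - (1 - 2 * β + 1) = (1 : ℝ) := by ring
    rw [← rpow_sub' (sqrt_nonneg _) (by rw [hexp]; exact one_ne_zero), hexp, rpow_one, one_mul]
end

section
/- For every real number β ≥ 0, the integral of the square root of the population-distance-based density satisfies ∫_{B_n} √(Φ(β, n)·(1 + |x|²)^{−β}) dx = Θ(g(β, n)); explicitly, this integral is Θ(1) if β > 2; Θ(log n) if β = 2; Θ(n^{1−β/2}) if 1 < β < 2; Θ(√(n/log n)) if β = 1; and Θ(√n) if 0 ≤ β < 1. -/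
open MeasureTheory

/-- `g(β, n)`: `1` if `β > 2`; `log n` if `β = 2`; `n^{1−β/2}` if `1 < β < 2`;
`√(n/log n)` if `β = 1`; `√n` if `0 ≤ β < 1`. -/
noncomputable def g (β : ℝ) (n : ℕ) : ℝ :=
  if 2 < β then 1
  else if β = 2 then Real.log n
  else if 1 < β then (n : ℝ) ^ (1 - β / 2)
  else if β = 1 then Real.sqrt ((n : ℝ) / Real.log n)
  else Real.sqrt n

/-! In polar coordinates and after the substitution `u = 1 + r²`, the weight integral
`J(α, n) = ∫_{B_n} (1 + |x|²)^{-α} dx` equals `π ∫_1^{1+n} u^{-α} du`; it therefore tends to a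
constant, grows like `π log n`, or grows like a constant times `n^{1-α}`, according as `α > 1`,
`α = 1` or `α < 1`. The integral of `√f_n` is `J(β/2, n) / √J(β, n)`, and in each regime of `β`
the growth rates of numerator and denominator combine to `g(β, n)`. -/

open Real Set Filter Topology
open scoped Interval

lemma integral_fun_norm_euclideanSpace_two (f : ℝ → ℝ) :
    ∫ x : EuclideanSpace ℝ (Fin 2), f ‖x‖ = 2 * π * ∫ y in Ioi (0 : ℝ), y * f y := by
  have hball : volume.real (Metric.ball (0 : EuclideanSpace ℝ (Fin 2)) 1) = π := by
    rw [measureReal_def, EuclideanSpace.volume_ball]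
    norm_num [Gamma_two, sq_sqrt pi_nonneg, ENNReal.toReal_ofReal pi_nonneg]
  rw [integral_fun_norm_addHaar volume f, finrank_euclideanSpace_fin, hball]
  simp only [smul_eq_mul, nsmul_eq_mul, Nat.cast_ofNat, Nat.add_one_sub_one, pow_one]
  ring

lemma setIntegral_closedBall_fun_norm (f : ℝ → ℝ) {r : ℝ} (hr : 0 ≤ r) :
    ∫ x in Metric.closedBall (0 : EuclideanSpace ℝ (Fin 2)) r, f ‖x‖
      = 2 * π * ∫ y in (0 : ℝ)..r, y * f y := by
  classical
  calc ∫ x in Metric.closedBall (0 : EuclideanSpace ℝ (Fin 2)) r, f ‖x‖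
      = ∫ x : EuclideanSpace ℝ (Fin 2), (fun y => if y ≤ r then f y else 0) ‖x‖ := by
        rw [← integral_indicator Metric.isClosed_closedBall.measurableSet]
        congr 1 with x
        simp [indicator_apply, Metric.mem_closedBall]
    _ = 2 * π * ∫ y in Ioi (0 : ℝ), y * if y ≤ r then f y else 0 :=
        integral_fun_norm_euclideanSpace_two (fun y => if y ≤ r then f y else 0)
    _ = 2 * π * ∫ y in (0 : ℝ)..r, y * f y := by
        rw [intervalIntegral.integral_of_le hr, ← Ioi_inter_Iic,
          ← setIntegral_indicator measurableSet_Iic]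
        congr 2 with y
        simp only [indicator_apply, mem_Iic]
        split_ifs <;> simp

lemma integral_mul_comp_one_add_sq {f : ℝ → ℝ} (hf : ContinuousOn f (Ici 1)) (s : ℝ) :
    ∫ y in (0 : ℝ)..s, y * f (1 + y ^ 2) = (∫ u in (1 : ℝ)..1 + s ^ 2, f u) / 2 := by
  have hsubst := intervalIntegral.integral_comp_mul_deriv' (a := 0) (b := s)
    (f := fun y => 1 + y ^ 2) (f' := fun y => 2 * y) (g := f)
    (fun y _ => by simpa using ((hasDerivAt_pow 2 y).const_add 1))
    (by fun_prop) (hf.mono (by rintro _ ⟨y, -, rfl⟩; simp [mem_Ici]; positivity))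
  simp only [Function.comp_def] at hsubst
  rw [zero_pow two_ne_zero, add_zero] at hsubst
  rw [← hsubst, eq_div_iff two_ne_zero, ← intervalIntegral.integral_mul_const]
  congr 1 with y
  ring

noncomputable def diskIntegral (α : ℝ) (n : ℕ) : ℝ := ∫ x in diskB n, (1 + ‖x‖ ^ 2) ^ (-α)

lemma diskIntegral_eq_integral_rpow (α : ℝ) (n : ℕ) :
    diskIntegral α n = π * ∫ u in (1 : ℝ)..1 + n, u ^ (-α) := by
  have hcont : ContinuousOn (fun u : ℝ => u ^ (-α)) (Ici 1) :=
    continuousOn_id.rpow_const fun u (hu : 1 ≤ u) => Or.inl (zero_lt_one.trans_le hu).ne'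
  rw [diskIntegral, diskB, setIntegral_closedBall_fun_norm (fun y => (1 + y ^ 2) ^ (-α))
    (sqrt_nonneg _), integral_mul_comp_one_add_sq hcont, sq_sqrt n.cast_nonneg]
  ring

lemma diskIntegral_of_ne_one {α : ℝ} (hα : α ≠ 1) (n : ℕ) :
    diskIntegral α n = π * ((1 + n : ℝ) ^ (1 - α) - 1) / (1 - α) := by
  have h0 : (0 : ℝ) ∉ [[1, 1 + (n : ℝ)]] := by
    rw [uIcc_of_le (by simp)]
    exact fun h => by linarith [h.1]
  rw [diskIntegral_eq_integral_rpow, integral_rpow (Or.inr ⟨by contrapose! hα; linarith, h0⟩),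
    one_rpow, neg_add_eq_sub, mul_div_assoc]

lemma diskIntegral_one (n : ℕ) : diskIntegral 1 n = π * Real.log (1 + n) := by
  simp_rw [diskIntegral_eq_integral_rpow, rpow_neg_one]
  rw [integral_inv_of_pos one_pos (by positivity), div_one]

lemma tendsto_diskIntegral_of_one_lt {α : ℝ} (hα : 1 < α) :
    Tendsto (diskIntegral α) atTop (𝓝 (π / (α - 1))) := by
  have hpow : Tendsto (fun n : ℕ => (1 + n : ℝ) ^ (-(α - 1))) atTop (𝓝 0) :=
    (tendsto_rpow_neg_atTop (by linarith)).comp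
      (tendsto_atTop_add_const_left _ 1 tendsto_natCast_atTop_atTop)
  rw [neg_sub] at hpow
  have hlim := ((hpow.sub_const 1).const_mul π).div_const (1 - α)
  rw [show π * (0 - 1) / (1 - α) = π / (α - 1) by
    rw [div_eq_div_iff (by linarith) (by linarith)]; ring] at hlim
  exact hlim.congr fun n => (diskIntegral_of_ne_one hα.ne' n).symm

lemma tendsto_diskIntegral_div_rpow_of_lt_one {α : ℝ} (hα : α < 1) :
    Tendsto (fun n : ℕ => diskIntegral α n / (n : ℝ) ^ (1 - α)) atTop (𝓝 (π / (1 - α))) := by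
  have hratio : Tendsto (fun n : ℕ => (1 + 1 / n : ℝ) ^ (1 - α)) atTop (𝓝 1) := by
    simpa using (tendsto_one_div_atTop_nhds_zero_nat.const_add (1 : ℝ)).rpow_const
      (p := 1 - α) (Or.inl (by norm_num))
  have hinv : Tendsto (fun n : ℕ => (n : ℝ) ^ (-(1 - α))) atTop (𝓝 0) :=
    (tendsto_rpow_neg_atTop (by linarith)).comp tendsto_natCast_atTop_atTop
  have hlim := ((hratio.sub hinv).const_mul π).div_const (1 - α)
  rw [sub_zero, mul_one] at hlim
  refine hlim.congr' ?_
  filter_upwards [eventually_gt_atTop 0] with n hn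
  have hn' : (0 : ℝ) < n := Nat.cast_pos.2 hn
  rw [diskIntegral_of_ne_one hα.ne, rpow_neg hn'.le, one_add_div hn'.ne', add_comm (n : ℝ),
    div_rpow (by positivity) hn'.le]
  field_simp

lemma tendsto_diskIntegral_one_div_log :
    Tendsto (fun n : ℕ => diskIntegral 1 n / Real.log n) atTop (𝓝 π) := by
  have hlog : Tendsto (fun n : ℕ => Real.log n) atTop atTop :=
    tendsto_log_atTop.comp tendsto_natCast_atTop_atTop
  have hlim := ((tendsto_log_nat_add_one_sub_log.div_atTop hlog).const_add 1).const_mul π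
  rw [add_zero, mul_one] at hlim
  refine hlim.congr' ?_
  filter_upwards [eventually_gt_atTop 1] with n hn
  have hlog_pos : 0 < Real.log n := log_pos (Nat.one_lt_cast.2 hn)
  rw [diskIntegral_one, add_comm (1 : ℝ) n]
  field_simp
  ring

noncomputable def diskIntegralRate (α : ℝ) (n : ℕ) : ℝ :=
  if 1 < α then 1 else if α = 1 then Real.log n else (n : ℝ) ^ (1 - α)

lemma diskIntegralRate_pos (α : ℝ) {n : ℕ} (hn : 2 ≤ n) : 0 < diskIntegralRate α n := by
  have hn' : (1 : ℝ) < n := by exact_mod_cast hn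
  unfold diskIntegralRate
  split_ifs
  exacts [one_pos, log_pos hn', rpow_pos_of_pos (by linarith) _]

lemma exists_tendsto_diskIntegral_div_rate (α : ℝ) :
    ∃ c, 0 < c ∧ Tendsto (fun n => diskIntegral α n / diskIntegralRate α n) atTop (𝓝 c) := by
  rcases lt_trichotomy α 1 with hα | rfl | hα
  · refine ⟨π / (1 - α), div_pos pi_pos (by linarith), ?_⟩
    simpa [diskIntegralRate, hα.not_gt, hα.ne] using tendsto_diskIntegral_div_rpow_of_lt_one hα
  · exact ⟨π, pi_pos, by simpa [diskIntegralRate] using tendsto_diskIntegral_one_div_log⟩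
  · refine ⟨π / (α - 1), div_pos pi_pos (by linarith), ?_⟩
    simpa [diskIntegralRate, hα] using tendsto_diskIntegral_of_one_lt hα

lemma integral_sqrt_density_eq (β : ℝ) (n : ℕ) :
    ∫ x in diskB n, Real.sqrt (Phi β n * (1 + ‖x‖ ^ 2) ^ (-β))
      = diskIntegral (β / 2) n / Real.sqrt (diskIntegral β n) := by
  have hpt (x : EuclideanSpace ℝ (Fin 2)) : Real.sqrt (Phi β n * (1 + ‖x‖ ^ 2) ^ (-β))
      = (1 + ‖x‖ ^ 2) ^ (-(β / 2)) / Real.sqrt (diskIntegral β n) := by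
    rw [Phi, ← diskIntegral, ← div_eq_inv_mul, sqrt_div (by positivity),
      sqrt_eq_rpow, ← rpow_mul (by positivity)]
    ring_nf
  simp_rw [hpt, integral_div, diskIntegral]

lemma g_eq_diskIntegralRate_div_sqrt (β : ℝ) {n : ℕ} (hn : 1 ≤ n) :
    g β n = diskIntegralRate (β / 2) n / Real.sqrt (diskIntegralRate β n) := by
  have hn' : (0 : ℝ) < n := by exact_mod_cast hn
  unfold g diskIntegralRate
  rcases lt_trichotomy β 1 with hβ | rfl | hβ
  · simp only [(by linarith : ¬2 < β), (by linarith : β ≠ 2), hβ.not_gt, hβ.ne,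
      (by linarith : ¬1 < β / 2), (by linarith : β / 2 ≠ 1), if_false]
    rw [sqrt_eq_rpow, sqrt_eq_rpow, ← rpow_mul hn'.le, ← rpow_sub hn']
    ring_nf
  · norm_num [sqrt_div' _ (log_natCast_nonneg n), sqrt_eq_rpow]
  · rcases lt_trichotomy β 2 with hβ2 | rfl | hβ2
    · simp [hβ, hβ2.not_gt, hβ2.ne, (by linarith : β / 2 < 1).not_gt, (by linarith : β / 2 ≠ 1)]
    · norm_num
    · simp [hβ, hβ2, (by linarith : 1 < β / 2)]

lemma isBigTheta_of_tendsto_div {f h : ℕ → ℝ} {L : ℝ} (hL : 0 < L)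
    (hf : Tendsto (fun n => f n / h n) atTop (𝓝 L)) (hh : ∀ᶠ n in atTop, 0 < h n) :
    IsBigTheta f h := by
  have hnear : ∀ᶠ n in atTop, f n / h n ∈ Ioo (L / 2) (2 * L) :=
    hf (Ioo_mem_nhds (by linarith) (by linarith))
  obtain ⟨N, hN⟩ := eventually_atTop.mp (hnear.and hh)
  refine ⟨L / 2, 2 * L, by linarith, by linarith, N, fun n hn => ?_⟩
  obtain ⟨⟨hlo, hhi⟩, hpos⟩ := hN n hn
  exact ⟨(le_div_iff₀ hpos).mp hlo.le, (div_le_iff₀ hpos).mp hhi.le⟩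

theorem sqrt_density_integral_order_general (β : ℝ) :
    IsBigTheta (fun n => ∫ x in diskB n, Real.sqrt (Phi β n * (1 + ‖x‖ ^ 2) ^ (-β)))
      (fun n => g β n) := by
  obtain ⟨a, ha, hA⟩ := exists_tendsto_diskIntegral_div_rate (β / 2)
  obtain ⟨b, hb, hB⟩ := exists_tendsto_diskIntegral_div_rate β
  have hg : ∀ᶠ n in atTop, g β n = diskIntegralRate (β / 2) n / √(diskIntegralRate β n) :=
    eventually_atTop.2 ⟨1, fun n hn => g_eq_diskIntegralRate_div_sqrt β hn⟩
  have hrate : ∀ᶠ n in atTop, 0 < diskIntegralRate (β / 2) n ∧ 0 < diskIntegralRate β n :=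
    eventually_atTop.2 ⟨2, fun n hn => ⟨diskIntegralRate_pos _ hn, diskIntegralRate_pos _ hn⟩⟩
  refine isBigTheta_of_tendsto_div (div_pos ha (sqrt_pos.2 hb)) ?_ ?_
  · refine (hA.div hB.sqrt (sqrt_pos.2 hb).ne').congr' ?_
    filter_upwards [hg, hrate] with n hgn hpos
    rw [Pi.div_apply, integral_sqrt_density_eq, hgn, sqrt_div' _ hpos.2.le, div_div_div_comm]
  · filter_upwards [hg, hrate] with n hgn hpos
    rw [hgn]
    exact div_pos hpos.1 (sqrt_pos.2 hpos.2)

theorem sqrt_density_integral_order (β : ℝ) (hβ : 0 ≤ β) :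
    IsBigTheta (fun n => ∫ x in diskB n, Real.sqrt (Phi β n * (1 + ‖x‖ ^ 2) ^ (-β)))
      (fun n => g β n) :=
  sqrt_density_integral_order_general β
end

section
/- For all real numbers γ, φ ≥ 0, the expected total number of social-multicast destinations W(γ, φ, n) satisfies: if φ > 2, W = Θ(n) for all γ ≥ 0; if φ = 2, W = Θ(n) for γ > 1 and W = Θ(n·log n) for 0 ≤ γ ≤ 1; if 1 < φ < 2, W = Θ(n) for γ > 3−φ, Θ(n·log n) for γ = 3−φ, Θ(n^{4−γ−φ}) for 1 < γ < 3−φ, Θ(n^{3−φ}/log n) for γ = 1, and Θ(n^{3−φ}) for 0 ≤ γ < 1; if φ = 1, W = Θ(n) for γ > 2, Θ(n^{3−γ}/log n) for 1 < γ < 2, Θ(n²/(log n)²) for γ = 1, and Θ(n²/log n) for 0 ≤ γ < 1; if 0 ≤ φ < 1, W = Θ(n) for γ > 2, Θ(n·log n) for γ = 2, Θ(n^{3−γ}) for 1 < γ < 2, Θ(n²/log n) for γ = 1, and Θ(n²) for 0 ≤ γ < 1. -/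
/-- Zipf normalization `Z(γ, n) = Σ_{j=1}^{n−1} j^{−γ}`. -/
noncomputable def Z (γ : ℝ) (n : ℕ) : ℝ := ∑ j ∈ Finset.Icc 1 (n - 1), (j : ℝ) ^ (-γ)

/-- `Z_φ(l) = Σ_{m=1}^{l} m^{−φ}`. -/
noncomputable def Zphi (φ : ℝ) (l : ℕ) : ℝ := ∑ m ∈ Finset.Icc 1 l, (m : ℝ) ^ (-φ)

/-- `D₁(φ, l) = Z_φ(l)⁻¹·Σ_{d=1}^{l} d^{1−φ}`. -/
noncomputable def D1 (φ : ℝ) (l : ℕ) : ℝ :=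
  (Zphi φ l)⁻¹ * ∑ d ∈ Finset.Icc 1 l, (d : ℝ) ^ (1 - φ)

/-- Expected total number of social-multicast destinations
`W(γ, φ, n) = n·Z(γ, n)⁻¹·Σ_{l=1}^{n−1} l^{−γ}·D₁(φ, l)`. -/
noncomputable def W (γ φ : ℝ) (n : ℕ) : ℝ :=
  n * (Z γ n)⁻¹ * ∑ l ∈ Finset.Icc 1 (n - 1), (l : ℝ) ^ (-γ) * D1 φ l

/-!
Every sum in `W` is a partial sum of a nonnegative sequence that is `Θ(l ^ q * (log l) ^ b)`.
For `q < -1` such partial sums are bounded above and below by positive constants. Otherwise they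
are `Θ` of the telescoping sums `∑ (G l - G (l - 1)) = G m - G 0` with
`G x = x ^ (q + 1) * (log x) ^ b` (or `G x = (log x) ^ (b + 1)` when `q = -1`), because by the mean
value theorem each increment is `G' ξ` for some `ξ ∈ (l - 1, l)`, and `G' ξ` is
`Θ(l ^ q * (log l) ^ b)`. Applied to the two sums defining `D₁`, to `Z` and to
`∑ l ^ (-γ) * D₁(φ, l)`, this writes every factor of `W` as `Θ(n ^ a * (log n) ^ b)`, and the
exponents add up.
-/

open Filter Asymptotics Finset Real Topology

theorem isBigTheta_of_isTheta {f h : ℕ → ℝ} (hf : ∀ᶠ n in atTop, 0 ≤ f n)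
    (hh : ∀ᶠ n in atTop, 0 < h n) (H : f =Θ[atTop] h) : IsBigTheta f h := by
  obtain ⟨c₂, -, hup⟩ := H.isBigO.exists_pos
  obtain ⟨c, hc, hlow⟩ := H.symm.isBigO.exists_pos
  have key : ∀ᶠ n in atTop, 0 < h n ∧ c⁻¹ * h n ≤ f n ∧ f n ≤ c₂ * h n := by
    filter_upwards [hf, hh, hup.bound, hlow.bound] with n hfn hhn hu hl
    rw [Real.norm_of_nonneg hfn, Real.norm_of_nonneg hhn.le] at hu hl
    exact ⟨hhn, by rwa [inv_mul_le_iff₀ hc], hu⟩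
  obtain ⟨N, hN⟩ := eventually_atTop.1 key
  obtain ⟨hpos, hlo, hhi⟩ := hN N le_rfl
  exact ⟨c⁻¹, c₂, inv_pos.2 hc, le_of_mul_le_mul_right (hlo.trans hhi) hpos, N,
    fun n hn => (hN n hn).2⟩

theorem Asymptotics.IsBigO.tendsto_atTop_of_nonneg {α : Type*} {l : Filter α} {u v : α → ℝ}
    (h : v =O[l] u) (hu : ∀ᶠ x in l, 0 ≤ u x) (hv : Tendsto v l atTop) :
    Tendsto u l atTop := by
  obtain ⟨c, hc, hvu⟩ := h.exists_pos
  refine tendsto_atTop_mono' l ?_ (hv.atTop_div_const hc)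
  filter_upwards [hvu.bound, hu] with x hx hux
  rw [div_le_iff₀' hc]
  rw [Real.norm_of_nonneg hux] at hx
  exact (le_abs_self _).trans hx

section PartialSums

variable {f g : ℕ → ℝ}

theorem exists_sum_Icc_le_of_isBigO (h : f =O[atTop] g) (hg : ∀ᶠ l in atTop, 0 ≤ g l) :
    ∃ C K : ℝ, 0 < C ∧ ∀ m, ∑ l ∈ Icc 1 m, f l ≤ C * ∑ l ∈ Icc 1 m, g l + K := by
  obtain ⟨C, hC, hfg⟩ := h.exists_pos
  obtain ⟨N, hN⟩ := eventually_atTop.1 (hfg.bound.and hg)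
  refine ⟨C, ∑ l ∈ Icc 1 N, |f l - C * g l|, hC, fun m => ?_⟩
  rw [← sub_le_iff_le_add', mul_sum, ← sum_sub_distrib,
    ← sum_filter_add_sum_filter_not (Icc 1 m) (· ≤ N)]
  have htail : ∑ l ∈ (Icc 1 m).filter (¬ · ≤ N), (f l - C * g l) ≤ 0 := by
    refine sum_nonpos fun l hl => ?_
    obtain ⟨hfl, hgl⟩ := hN l (by simp only [mem_filter] at hl; omega)
    rw [Real.norm_of_nonneg hgl] at hfl
    linarith [le_abs_self (f l), Real.norm_eq_abs (f l)]
  have hhead : ∑ l ∈ (Icc 1 m).filter (· ≤ N), (f l - C * g l) ≤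
      ∑ l ∈ Icc 1 N, |f l - C * g l| :=
    (sum_le_sum fun l _ => le_abs_self _).trans <| sum_le_sum_of_subset_of_nonneg
      (fun l hl => by simp only [mem_filter, mem_Icc] at hl ⊢; omega) fun _ _ _ => abs_nonneg _
  linarith

theorem isTheta_sum_Icc (hf : ∀ᶠ l in atTop, 0 ≤ f l) (hg : ∀ᶠ l in atTop, 0 ≤ g l)
    (h : f =Θ[atTop] g) (hG : Tendsto (fun m => ∑ l ∈ Icc 1 m, g l) atTop atTop) :
    (fun m => ∑ l ∈ Icc 1 m, f l) =Θ[atTop] fun m => ∑ l ∈ Icc 1 m, g l := by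
  obtain ⟨C, K, hC, hfg⟩ := exists_sum_Icc_le_of_isBigO h.isBigO hg
  obtain ⟨C', K', hC', hgf⟩ := exists_sum_Icc_le_of_isBigO h.symm.isBigO hf
  have key : ∀ᶠ m in atTop, 0 ≤ ∑ l ∈ Icc 1 m, g l ∧
      ∑ l ∈ Icc 1 m, g l ≤ 2 * C' * ∑ l ∈ Icc 1 m, f l ∧
      ∑ l ∈ Icc 1 m, f l ≤ (C + 1) * ∑ l ∈ Icc 1 m, g l := by
    filter_upwards [hG.eventually_ge_atTop (|K| + 2 * |K'|)] with m hm
    have := abs_nonneg K; have := abs_nonneg K'; have := le_abs_self K; have := le_abs_self K'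
    exact ⟨by linarith, by linarith [hgf m], by linarith [hfg m]⟩
  refine ⟨IsBigO.of_bound (C + 1) ?_, IsBigO.of_bound (2 * C') ?_⟩ <;>
    filter_upwards [key] with m ⟨hg0, hgf', hfg'⟩ <;>
    rwa [Real.norm_of_nonneg hg0,
      Real.norm_of_nonneg (nonneg_of_mul_nonneg_right (hg0.trans hgf') (by positivity))]

theorem isTheta_sum_Icc_of_tendsto {h : ℕ → ℝ} (hf0 : ∀ l, 0 ≤ f l)
    (hg0 : ∀ l, 0 ≤ g l) (hfg : f =Θ[atTop] g) (hg : (fun m => ∑ l ∈ Icc 1 m, g l) =Θ[atTop] h)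
    (htop : Tendsto h atTop atTop) : (fun m => ∑ l ∈ Icc 1 m, f l) =Θ[atTop] h :=
  (isTheta_sum_Icc (.of_forall hf0) (.of_forall hg0) hfg <|
    hg.symm.isBigO.tendsto_atTop_of_nonneg (.of_forall fun _ => sum_nonneg fun l _ => hg0 l)
      htop).trans hg

theorem isTheta_sum_Icc_one_of_summable (hf : ∀ l, 0 ≤ f l) (hpos : ∀ᶠ l in atTop, 0 < f l)
    (hs : Summable f) : (fun m => ∑ l ∈ Icc 1 m, f l) =Θ[atTop] fun _ => (1 : ℝ) := by
  obtain ⟨L, hL, hL1⟩ := (hpos.and (eventually_ge_atTop 1)).exists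
  refine ⟨IsBigO.of_bound (∑' l, f l) (Eventually.of_forall fun m => ?_),
    IsBigO.of_bound (f L)⁻¹ ?_⟩
  · rw [norm_one, mul_one, Real.norm_of_nonneg (sum_nonneg fun l _ => hf l)]
    exact hs.sum_le_tsum _ fun l _ => hf l
  · filter_upwards [eventually_ge_atTop L] with m hm
    have hle : f L ≤ ∑ l ∈ Icc 1 m, f l :=
      single_le_sum (fun l _ => hf l) (mem_Icc.2 ⟨hL1, hm⟩)
    rw [norm_one, Real.norm_of_nonneg (hL.le.trans hle), ← div_eq_inv_mul, le_div_iff₀ hL,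
      one_mul]
    exact hle

end PartialSums

theorem sum_Icc_sub_pred (u : ℕ → ℝ) (m : ℕ) :
    ∑ l ∈ Icc 1 m, (u l - u (l - 1)) = u m - u 0 := by
  induction m with
  | zero => simp
  | succ m ih => rw [sum_Icc_succ_top (by omega), ih, Nat.add_sub_cancel]; ring

section MeanValue

variable {G G' : ℝ → ℝ} {g : ℕ → ℝ}

theorem eventually_exists_sub_pred_eq (hG : ∀ᶠ x in atTop, HasDerivAt G (G' x) x)
    {P : ℝ → Prop} (hP : ∀ᶠ x in atTop, P x) :
    ∀ᶠ l : ℕ in atTop, ∃ ξ, P ξ ∧ ⌈ξ⌉₊ = l ∧ G l - G ↑(l - 1) = G' ξ := by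
  obtain ⟨X, hX⟩ := eventually_atTop.1 (hP.and hG)
  filter_upwards [eventually_gt_atTop ⌈X⌉₊] with l hl
  have hcast : ((l - 1 : ℕ) : ℝ) = l - 1 := by rw [Nat.cast_sub (by omega), Nat.cast_one]
  have hXl : X ≤ (l : ℝ) - 1 := by
    rw [← hcast]
    exact (Nat.le_ceil X).trans (by exact_mod_cast Nat.le_sub_one_of_lt hl)
  obtain ⟨ξ, hξ, hslope⟩ := exists_hasDerivAt_eq_slope G G' (sub_one_lt (l : ℝ))
    (fun x hx => (hX x (hXl.trans hx.1)).2.continuousAt.continuousWithinAt)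
    (fun x hx => (hX x (hXl.trans hx.1.le)).2)
  refine ⟨ξ, (hX ξ (hXl.trans hξ.1.le)).1, ?_, ?_⟩
  · rw [Nat.ceil_eq_iff (by omega), hcast]
    exact ⟨hξ.1, hξ.2.le⟩
  · rw [hslope, hcast, sub_sub_cancel, div_one]

theorem isTheta_sub_pred_of_hasDerivAt (hG : ∀ᶠ x in atTop, HasDerivAt G (G' x) x)
    (hG' : G' =Θ[atTop] fun x => g ⌈x⌉₊) :
    (fun l : ℕ => G l - G ↑(l - 1)) =Θ[atTop] g := by
  obtain ⟨c, hc⟩ := hG'.isBigO.bound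
  obtain ⟨c', hc'⟩ := hG'.symm.isBigO.bound
  refine ⟨IsBigO.of_bound c ?_, IsBigO.of_bound c' ?_⟩
  · filter_upwards [eventually_exists_sub_pred_eq hG hc] with l ⟨ξ, hξ, hceil, heq⟩
    rwa [heq, ← hceil]
  · filter_upwards [eventually_exists_sub_pred_eq hG hc'] with l ⟨ξ, hξ, hceil, heq⟩
    rwa [heq, ← hceil]

theorem isTheta_sum_Icc_of_hasDerivAt (hG : ∀ᶠ x in atTop, HasDerivAt G (G' x) x)
    (hG' : G' =Θ[atTop] fun x => g ⌈x⌉₊) (hG'0 : ∀ᶠ x in atTop, 0 ≤ G' x)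
    (hg : ∀ l, 0 ≤ g l) (hGtop : Tendsto G atTop atTop) :
    (fun m => ∑ l ∈ Icc 1 m, g l) =Θ[atTop] fun m : ℕ => G m := by
  have htel : ∀ m : ℕ, ∑ l ∈ Icc 1 m, (G l - G ↑(l - 1)) = G m - G 0 := by
    simpa using sum_Icc_sub_pred fun l : ℕ => G l
  have hGnat : Tendsto (fun m : ℕ => G m) atTop atTop := hGtop.comp tendsto_natCast_atTop_atTop
  have hd0 : ∀ᶠ l : ℕ in atTop, 0 ≤ G l - G ↑(l - 1) := by
    filter_upwards [eventually_exists_sub_pred_eq hG hG'0] with l ⟨ξ, hξ, _, heq⟩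
    exact heq ▸ hξ
  have hsum := isTheta_sum_Icc (Eventually.of_forall hg) hd0
    (isTheta_sub_pred_of_hasDerivAt hG hG').symm
    (by simpa only [htel, ← sub_eq_add_neg] using tendsto_atTop_add_const_right _ (-G 0) hGnat)
  simp only [htel] at hsum
  refine hsum.trans (IsEquivalent.isTheta ?_)
  simpa only [sub_eq_add_neg] using IsEquivalent.refl.add_const_of_norm_tendsto_atTop
    (tendsto_norm_atTop_atTop.comp hGnat)

end MeanValue

noncomputable def powLog (a b : ℝ) (m : ℕ) : ℝ := (m : ℝ) ^ a * log m ^ b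

section PowLog

variable {a b c d : ℝ} {m : ℕ}

theorem powLog_nonneg (a b : ℝ) (m : ℕ) : 0 ≤ powLog a b m :=
  mul_nonneg (rpow_nonneg m.cast_nonneg a) (rpow_nonneg (log_natCast_nonneg m) b)

theorem powLog_pos (hm : 2 ≤ m) : 0 < powLog a b m := by
  have hm' : (1 : ℝ) < m := by exact_mod_cast hm
  exact mul_pos (rpow_pos_of_pos (by linarith) a) (rpow_pos_of_pos (log_pos hm') b)

theorem powLog_mul (hm : 2 ≤ m) : powLog a b m * powLog c d m = powLog (a + c) (b + d) m := by
  have hm' : (1 : ℝ) < m := by exact_mod_cast hm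
  simp only [powLog, rpow_add (by linarith : (0 : ℝ) < m), rpow_add (log_pos hm')]
  ring

theorem powLog_div (hm : 2 ≤ m) : powLog a b m / powLog c d m = powLog (a - c) (b - d) m := by
  have hm' : (1 : ℝ) < m := by exact_mod_cast hm
  simp only [powLog, rpow_sub (by linarith : (0 : ℝ) < m), rpow_sub (log_pos hm')]
  ring

theorem powLog_zero_zero : powLog 0 0 = fun _ => 1 := by
  funext m; simp [powLog]

theorem powLog_zero_left (b : ℝ) : powLog 0 b = fun m : ℕ => log m ^ b := by
  funext m; simp [powLog]

theorem powLog_zero_right (a : ℝ) : powLog a 0 = fun m : ℕ => (m : ℝ) ^ a := by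
  funext m; simp [powLog]

theorem powLog_neg_one_right (a : ℝ) : powLog a (-1) = fun m : ℕ => (m : ℝ) ^ a / log m := by
  funext m; simp [powLog, rpow_neg_one, div_eq_mul_inv]

theorem powLog_one_zero : powLog 1 0 = fun m : ℕ => (m : ℝ) := by
  funext m; simp [powLog]

theorem powLog_one_one : powLog 1 1 = fun m : ℕ => (m : ℝ) * log m := by
  funext m; simp [powLog]

theorem powLog_two_zero : powLog 2 0 = fun m : ℕ => (m : ℝ) ^ 2 := by
  funext m; simp [powLog]

theorem powLog_two_neg_one : powLog 2 (-1) = fun m : ℕ => (m : ℝ) ^ 2 / log m := by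
  funext m; simp [powLog, rpow_neg_one, div_eq_mul_inv]

theorem powLog_two_neg_two : powLog 2 (-2) = fun m : ℕ => (m : ℝ) ^ 2 / log m ^ 2 := by
  funext m; simp [powLog, rpow_neg (log_natCast_nonneg m), div_eq_mul_inv]

variable {f g : ℕ → ℝ}

theorem Asymptotics.IsTheta.mul_powLog (hf : f =Θ[atTop] powLog a b)
    (hg : g =Θ[atTop] powLog c d) : (fun m => f m * g m) =Θ[atTop] powLog (a + c) (b + d) :=
  (hf.mul hg).trans_eventuallyEq <| by
    filter_upwards [eventually_ge_atTop 2] with m hm using powLog_mul hm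

theorem Asymptotics.IsTheta.div_powLog (hf : f =Θ[atTop] powLog a b)
    (hg : g =Θ[atTop] powLog c d) : (fun m => f m / g m) =Θ[atTop] powLog (a - c) (b - d) :=
  (hf.div hg).trans_eventuallyEq <| by
    filter_upwards [eventually_ge_atTop 2] with m hm using powLog_div hm

theorem Asymptotics.IsEquivalent.rpow_mul_log_rpow {α : Type*} {l : Filter α} {u : α → ℝ}
    {k : α → ℕ} (h : u ~[l] fun x => (k x : ℝ)) (hk : Tendsto k l atTop) (a b : ℝ) :
    (fun x => u x ^ a * Real.log (u x) ^ b) ~[l] fun x => powLog a b (k x) :=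
  (h.rpow fun x => (k x).cast_nonneg).mul <|
    (h.log (tendsto_natCast_atTop_atTop.comp hk)).rpow fun x => log_natCast_nonneg (k x)

theorem isTheta_powLog_sub_one (a b : ℝ) :
    (fun n => powLog a b (n - 1)) =Θ[atTop] powLog a b := by
  have hpred : (fun n : ℕ => ((n - 1 : ℕ) : ℝ)) ~[atTop] fun n => (n : ℝ) := by
    refine (IsEquivalent.refl.add_const_of_norm_tendsto_atTop (c := -1)
      (tendsto_norm_atTop_atTop.comp tendsto_natCast_atTop_atTop)).congr_left ?_
    filter_upwards [eventually_ge_atTop 1] with n hn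
    rw [Nat.cast_sub hn, Nat.cast_one, sub_eq_add_neg]
  exact (hpred.rpow_mul_log_rpow tendsto_id a b).isTheta

theorem isEquivalent_powLog_natCeil (a b : ℝ) :
    (fun x : ℝ => x ^ a * log x ^ b) ~[atTop] fun x => powLog a b ⌈x⌉₊ :=
  isEquivalent_nat_ceil.symm.rpow_mul_log_rpow tendsto_nat_ceil_atTop a b

theorem tendsto_rpow_mul_log_rpow_atTop (ha : 0 < a) (b : ℝ) :
    Tendsto (fun x : ℝ => x ^ a * log x ^ b) atTop atTop := by
  have hinv : Tendsto (fun x : ℝ => (x ^ a * log x ^ b)⁻¹) atTop (𝓝[>] 0) := by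
    refine tendsto_nhdsWithin_iff.2 ⟨?_, ?_⟩
    · refine ((isLittleO_log_rpow_rpow_atTop (-b) ha).tendsto_div_nhds_zero).congr' ?_
      filter_upwards [eventually_gt_atTop 1] with x hx
      rw [mul_inv, rpow_neg (log_nonneg hx.le), div_eq_mul_inv, mul_comm]
    · filter_upwards [eventually_gt_atTop 1] with x hx
      exact inv_pos.2 (mul_pos (rpow_pos_of_pos (by linarith) a) (rpow_pos_of_pos (log_pos hx) b))
  simpa only [Pi.inv_def, inv_inv] using hinv.inv_tendsto_nhdsGT_zero

theorem summable_powLog {q : ℝ} (hq : q < -1) (b : ℝ) : Summable (powLog q b) := by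
  have hε : 0 < (-1 - q) / 2 := by linarith
  refine summable_of_isBigO_nat (Real.summable_nat_rpow.2 (by linarith : q + (-1 - q) / 2 < -1)) ?_
  have hlog := ((isLittleO_log_rpow_rpow_atTop b hε).comp_tendsto
    tendsto_natCast_atTop_atTop).isBigO
  refine ((isBigO_refl (fun n : ℕ => (n : ℝ) ^ q) atTop).mul hlog).trans_eventuallyEq ?_
  filter_upwards [eventually_ge_atTop 1] with n hn
  simp only [Function.comp_apply]
  rw [← rpow_add (by exact_mod_cast hn)]

end PowLog

section PowLogSums

theorem isTheta_sum_powLog_of_neg_one_lt {q : ℝ} (hq : -1 < q) (b : ℝ) :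
    (fun m => ∑ l ∈ Icc 1 m, powLog q b l) =Θ[atTop] powLog (q + 1) b := by
  have hq1 : 0 < q + 1 := by linarith
  have hderiv : ∀ᶠ x : ℝ in atTop, HasDerivAt (fun x => x ^ (q + 1) * log x ^ b)
      (x ^ q * log x ^ b * (q + 1 + b / log x)) x := by
    filter_upwards [eventually_gt_atTop 1] with x hx
    have hx0 : x ≠ 0 := by positivity
    have hlog : log x ≠ 0 := (log_pos hx).ne'
    refine ((hasDerivAt_rpow_const (p := q + 1) (Or.inl hx0)).mul
      ((hasDerivAt_log hx0).rpow_const (p := b) (Or.inl hlog))).congr_deriv ?_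
    rw [add_sub_cancel_right, rpow_sub_one hlog, rpow_add_one hx0]
    field_simp
  have hfactor : Tendsto (fun x : ℝ => q + 1 + b / log x) atTop (𝓝 (q + 1)) := by
    simpa [div_eq_mul_inv] using
      tendsto_const_nhds.add (tendsto_log_atTop.inv_tendsto_atTop.const_mul b)
  have hfactor' : (fun x : ℝ => q + 1 + b / log x) =Θ[atTop] fun _ => (1 : ℝ) :=
    ((isEquivalent_const_iff_tendsto hq1.ne').2 hfactor).isTheta.trans
      (isTheta_const_const hq1.ne' one_ne_zero)
  refine isTheta_sum_Icc_of_hasDerivAt hderiv ?_ ?_ (powLog_nonneg q b)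
    (tendsto_rpow_mul_log_rpow_atTop hq1 b)
  · simpa only [mul_one] using
      (isEquivalent_powLog_natCeil q b).isTheta.mul hfactor'
  · filter_upwards [eventually_ge_atTop 1, hfactor.eventually (lt_mem_nhds hq1)] with x hx hpos
    exact mul_nonneg (mul_nonneg (rpow_nonneg (by linarith) q)
      (rpow_nonneg (log_nonneg hx) b)) hpos.le

theorem isTheta_sum_powLog_neg_one {b : ℝ} (hb : -1 < b) :
    (fun m => ∑ l ∈ Icc 1 m, powLog (-1) b l) =Θ[atTop] powLog 0 (b + 1) := by
  have hb1 : 0 < b + 1 := by linarith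
  have hderiv : ∀ᶠ x : ℝ in atTop, HasDerivAt (fun x => log x ^ (b + 1))
      ((b + 1) * (x ^ (-1 : ℝ) * log x ^ b)) x := by
    filter_upwards [eventually_gt_atTop 1] with x hx
    refine ((hasDerivAt_log (by positivity : x ≠ 0)).rpow_const (p := b + 1)
      (Or.inl (log_pos hx).ne')).congr_deriv ?_
    rw [rpow_neg_one, add_sub_cancel_right]
    ring
  rw [powLog_zero_left]
  refine isTheta_sum_Icc_of_hasDerivAt hderiv
    ((isEquivalent_powLog_natCeil (-1) b).isTheta.const_mul_left hb1.ne') ?_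
    (powLog_nonneg (-1) b) ((tendsto_rpow_atTop hb1).comp tendsto_log_atTop)
  filter_upwards [eventually_ge_atTop 1] with x hx
  exact mul_nonneg hb1.le (mul_nonneg (rpow_nonneg (by linarith) _) (rpow_nonneg (log_nonneg hx) b))

variable {f : ℕ → ℝ} {q b : ℝ}

theorem Asymptotics.IsTheta.sum_Icc_of_neg_one_lt (hf : f =Θ[atTop] powLog q b)
    (hf0 : ∀ l, 0 ≤ f l) (hq : -1 < q) :
    (fun m => ∑ l ∈ Icc 1 m, f l) =Θ[atTop] powLog (q + 1) b :=
  isTheta_sum_Icc_of_tendsto hf0 (powLog_nonneg q b) hf (isTheta_sum_powLog_of_neg_one_lt hq b)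
    ((tendsto_rpow_mul_log_rpow_atTop (by linarith) b).comp tendsto_natCast_atTop_atTop)

theorem Asymptotics.IsTheta.sum_Icc_of_eq_neg_one (hf : f =Θ[atTop] powLog q b)
    (hf0 : ∀ l, 0 ≤ f l) (hq : q = -1) (hb : -1 < b) :
    (fun m => ∑ l ∈ Icc 1 m, f l) =Θ[atTop] powLog 0 (b + 1) := by
  subst hq
  refine isTheta_sum_Icc_of_tendsto hf0 (powLog_nonneg (-1) b) hf (isTheta_sum_powLog_neg_one hb) ?_
  rw [powLog_zero_left]
  exact (tendsto_rpow_atTop (by linarith)).comp (tendsto_log_atTop.comp tendsto_natCast_atTop_atTop)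

theorem Asymptotics.IsTheta.sum_Icc_of_lt_neg_one (hf : f =Θ[atTop] powLog q b)
    (hf0 : ∀ l, 0 ≤ f l) (hq : q < -1) :
    (fun m => ∑ l ∈ Icc 1 m, f l) =Θ[atTop] powLog 0 0 := by
  rw [powLog_zero_zero]
  refine isTheta_sum_Icc_one_of_summable hf0 ?_
    (summable_of_isBigO_nat (summable_powLog hq b) hf.isBigO)
  filter_upwards [hf.symm.isBigO.eq_zero_imp, eventually_ge_atTop 2] with l hl hl2
  exact (hf0 l).lt_of_ne fun h => (powLog_pos hl2).ne' (hl h.symm)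

end PowLogSums

section Destinations

variable {γ φ : ℝ}

theorem isTheta_rpow_powLog (q : ℝ) : (fun l : ℕ => (l : ℝ) ^ q) =Θ[atTop] powLog q 0 :=
  powLog_zero_right q ▸ isTheta_refl _ _

theorem natCast_rpow_nonneg (q : ℝ) (l : ℕ) : 0 ≤ (l : ℝ) ^ q := rpow_nonneg l.cast_nonneg q

theorem isTheta_sum_rpow_of_neg_one_lt {q : ℝ} (hq : -1 < q) :
    (fun m : ℕ => ∑ j ∈ Icc 1 m, (j : ℝ) ^ q) =Θ[atTop] powLog (q + 1) 0 :=
  (isTheta_rpow_powLog q).sum_Icc_of_neg_one_lt (natCast_rpow_nonneg q) hq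

theorem isTheta_sum_rpow_of_eq_neg_one {q : ℝ} (hq : q = -1) :
    (fun m : ℕ => ∑ j ∈ Icc 1 m, (j : ℝ) ^ q) =Θ[atTop] powLog 0 (0 + 1) :=
  (isTheta_rpow_powLog q).sum_Icc_of_eq_neg_one (natCast_rpow_nonneg q) hq (by norm_num)

theorem isTheta_sum_rpow_of_lt_neg_one {q : ℝ} (hq : q < -1) :
    (fun m : ℕ => ∑ j ∈ Icc 1 m, (j : ℝ) ^ q) =Θ[atTop] powLog 0 0 :=
  (isTheta_rpow_powLog q).sum_Icc_of_lt_neg_one (natCast_rpow_nonneg q) hq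

theorem D1_nonneg (φ : ℝ) (l : ℕ) : 0 ≤ D1 φ l :=
  mul_nonneg (inv_nonneg.2 (sum_nonneg fun m _ => natCast_rpow_nonneg _ m))
    (sum_nonneg fun d _ => natCast_rpow_nonneg _ d)

theorem isTheta_D1 {a b a' b' : ℝ}
    (hZ : (fun l : ℕ => ∑ m ∈ Icc 1 l, (m : ℝ) ^ (-φ)) =Θ[atTop] powLog a b)
    (hN : (fun l : ℕ => ∑ d ∈ Icc 1 l, (d : ℝ) ^ (1 - φ)) =Θ[atTop] powLog a' b') :
    D1 φ =Θ[atTop] powLog (a' - a) (b' - b) := by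
  unfold D1 Zphi
  simpa only [div_eq_inv_mul] using hN.div_powLog hZ

theorem isTheta_D1_of_two_lt (hφ : 2 < φ) : D1 φ =Θ[atTop] powLog 0 0 := by
  simpa using isTheta_D1 (φ := φ)
    (isTheta_sum_rpow_of_lt_neg_one (by linarith))
    (isTheta_sum_rpow_of_lt_neg_one (by linarith))

theorem isTheta_D1_two : D1 2 =Θ[atTop] powLog 0 1 := by
  simpa using isTheta_D1 (φ := 2)
    (isTheta_sum_rpow_of_lt_neg_one (by norm_num))
    (isTheta_sum_rpow_of_eq_neg_one (by norm_num))

theorem isTheta_D1_of_one_lt_of_lt_two (h1 : 1 < φ) (h2 : φ < 2) :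
    D1 φ =Θ[atTop] powLog (2 - φ) 0 := by
  convert isTheta_D1 (φ := φ)
    (isTheta_sum_rpow_of_lt_neg_one (by linarith))
    (isTheta_sum_rpow_of_neg_one_lt (by linarith))
    using 2 <;> ring

theorem isTheta_D1_one : D1 1 =Θ[atTop] powLog 1 (-1) := by
  convert isTheta_D1 (φ := 1)
    (isTheta_sum_rpow_of_eq_neg_one rfl)
    (isTheta_sum_rpow_of_neg_one_lt (by norm_num))
    using 2 <;> ring

theorem isTheta_D1_of_lt_one (hφ : φ < 1) : D1 φ =Θ[atTop] powLog 1 0 := by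
  convert isTheta_D1 (φ := φ)
    (isTheta_sum_rpow_of_neg_one_lt (by linarith))
    (isTheta_sum_rpow_of_neg_one_lt (by linarith))
    using 2 <;> ring

theorem isTheta_rpow_mul_D1 {α β : ℝ} (hD : D1 φ =Θ[atTop] powLog α β) :
    (fun l : ℕ => (l : ℝ) ^ (-γ) * D1 φ l) =Θ[atTop] powLog (-γ + α) (0 + β) :=
  (isTheta_rpow_powLog (-γ)).mul_powLog hD

theorem rpow_mul_D1_nonneg (γ φ : ℝ) (l : ℕ) : 0 ≤ (l : ℝ) ^ (-γ) * D1 φ l :=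
  mul_nonneg (natCast_rpow_nonneg _ l) (D1_nonneg φ l)

theorem W_nonneg (γ φ : ℝ) (n : ℕ) : 0 ≤ W γ φ n :=
  mul_nonneg (mul_nonneg n.cast_nonneg (inv_nonneg.2 (sum_nonneg fun j _ =>
    natCast_rpow_nonneg _ j))) (sum_nonneg fun l _ => rpow_mul_D1_nonneg γ φ l)

theorem isBigTheta_W {a₁ b₁ a₂ b₂ a b : ℝ} {h : ℕ → ℝ}
    (hZ : (fun m : ℕ => ∑ j ∈ Icc 1 m, (j : ℝ) ^ (-γ)) =Θ[atTop] powLog a₁ b₁)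
    (hS : (fun m : ℕ => ∑ l ∈ Icc 1 m, (l : ℝ) ^ (-γ) * D1 φ l) =Θ[atTop]
      powLog a₂ b₂)
    (ha : 1 + (a₂ - a₁) = a) (hb : 0 + (b₂ - b₁) = b) (hh : powLog a b = h) :
    IsBigTheta (fun n => W γ φ n) h := by
  subst ha hb hh
  have hratio := hS.div_powLog hZ
  have hshift : (fun n => powLog (a₂ - a₁) (b₂ - b₁) (n - 1)) =Θ[atTop] _ :=
    isTheta_powLog_sub_one _ _
  have hW := (isTheta_refl (powLog 1 0) atTop).mul_powLog <|
    (IsTheta.trans ⟨hratio.1.comp_tendsto (tendsto_sub_atTop_nat 1),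
      hratio.2.comp_tendsto (tendsto_sub_atTop_nat 1)⟩ hshift)
  refine isBigTheta_of_isTheta (.of_forall (W_nonneg γ φ))
    (by filter_upwards [eventually_ge_atTop 2] with n hn using powLog_pos hn) ?_
  convert hW using 2 with n
  simp only [W, Z, powLog_one_zero, Function.comp_apply]
  ring

end Destinations

section Regimes

variable {φ : ℝ}

theorem isBigTheta_W_of_two_lt (γ : ℝ) (hφ : 2 < φ) :
    IsBigTheta (fun n => W γ φ n) fun n => (n : ℝ) := by
  have hS := isTheta_rpow_mul_D1 (γ := γ) (isTheta_D1_of_two_lt hφ)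
  have hS0 := rpow_mul_D1_nonneg γ φ
  rcases lt_trichotomy γ 1 with hγ | rfl | hγ
  · exact isBigTheta_W (isTheta_sum_rpow_of_neg_one_lt (by linarith))
      (hS.sum_Icc_of_neg_one_lt hS0 (by linarith)) (by ring) (by ring) powLog_one_zero
  · exact isBigTheta_W (isTheta_sum_rpow_of_eq_neg_one rfl)
      (hS.sum_Icc_of_eq_neg_one hS0 (by ring) (by norm_num)) (by ring) (by ring) powLog_one_zero
  · exact isBigTheta_W (isTheta_sum_rpow_of_lt_neg_one (by linarith))
      (hS.sum_Icc_of_lt_neg_one hS0 (by linarith)) (by ring) (by ring) powLog_one_zero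

theorem isBigTheta_W_two (γ : ℝ) :
    (1 < γ → IsBigTheta (fun n => W γ 2 n) (fun n => (n : ℝ))) ∧
    (γ ≤ 1 → IsBigTheta (fun n => W γ 2 n) (fun n => (n : ℝ) * Real.log n)) := by
  have hS := isTheta_rpow_mul_D1 (γ := γ) isTheta_D1_two
  have hS0 := rpow_mul_D1_nonneg γ 2
  refine ⟨fun hγ => ?_, fun hγ => ?_⟩
  · exact isBigTheta_W (isTheta_sum_rpow_of_lt_neg_one (by linarith))
      (hS.sum_Icc_of_lt_neg_one hS0 (by linarith)) (by ring) (by ring) powLog_one_zero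
  rcases hγ.lt_or_eq with hγ | rfl
  · exact isBigTheta_W (isTheta_sum_rpow_of_neg_one_lt (by linarith))
      (hS.sum_Icc_of_neg_one_lt hS0 (by linarith)) (by ring) (by ring) powLog_one_one
  · exact isBigTheta_W (isTheta_sum_rpow_of_eq_neg_one rfl)
      (hS.sum_Icc_of_eq_neg_one hS0 (by ring) (by norm_num)) (by ring) (by ring) powLog_one_one

theorem isBigTheta_W_of_one_lt_of_lt_two (γ : ℝ) (h1 : 1 < φ) (h2 : φ < 2) :
    (3 - φ < γ → IsBigTheta (fun n => W γ φ n) (fun n => (n : ℝ))) ∧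
    (γ = 3 - φ → IsBigTheta (fun n => W γ φ n) (fun n => (n : ℝ) * Real.log n)) ∧
    (1 < γ ∧ γ < 3 - φ →
      IsBigTheta (fun n => W γ φ n) (fun n => (n : ℝ) ^ (4 - γ - φ))) ∧
    (γ = 1 → IsBigTheta (fun n => W γ φ n) (fun n => (n : ℝ) ^ (3 - φ) / Real.log n)) ∧
    (γ < 1 → IsBigTheta (fun n => W γ φ n) (fun n => (n : ℝ) ^ (3 - φ))) := by
  have hS := isTheta_rpow_mul_D1 (γ := γ) (isTheta_D1_of_one_lt_of_lt_two h1 h2)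
  have hS0 := rpow_mul_D1_nonneg γ φ
  refine ⟨fun hγ => ?_, fun hγ => ?_, fun ⟨hγ1, hγ2⟩ => ?_, fun hγ => ?_,
    fun hγ => ?_⟩
  · exact isBigTheta_W (isTheta_sum_rpow_of_lt_neg_one (by linarith))
      (hS.sum_Icc_of_lt_neg_one hS0 (by linarith)) (by ring) (by ring) powLog_one_zero
  · exact isBigTheta_W (isTheta_sum_rpow_of_lt_neg_one (by linarith))
      (hS.sum_Icc_of_eq_neg_one hS0 (by linarith) (by norm_num)) (by ring) (by ring) powLog_one_one
  · exact isBigTheta_W (isTheta_sum_rpow_of_lt_neg_one (by linarith))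
      (hS.sum_Icc_of_neg_one_lt hS0 (by linarith)) (by ring) (by ring) (powLog_zero_right _)
  · subst hγ
    exact isBigTheta_W (isTheta_sum_rpow_of_eq_neg_one rfl)
      (hS.sum_Icc_of_neg_one_lt hS0 (by linarith)) (by ring) (by ring) (powLog_neg_one_right _)
  · exact isBigTheta_W (isTheta_sum_rpow_of_neg_one_lt (by linarith))
      (hS.sum_Icc_of_neg_one_lt hS0 (by linarith)) (by ring) (by ring) (powLog_zero_right _)

theorem isBigTheta_W_one (γ : ℝ) :
    (2 < γ → IsBigTheta (fun n => W γ 1 n) (fun n => (n : ℝ))) ∧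
    (1 < γ ∧ γ < 2 →
      IsBigTheta (fun n => W γ 1 n) (fun n => (n : ℝ) ^ (3 - γ) / Real.log n)) ∧
    (γ = 1 → IsBigTheta (fun n => W γ 1 n) (fun n => (n : ℝ) ^ 2 / Real.log n ^ 2)) ∧
    (γ < 1 → IsBigTheta (fun n => W γ 1 n) (fun n => (n : ℝ) ^ 2 / Real.log n)) := by
  have hS := isTheta_rpow_mul_D1 (γ := γ) isTheta_D1_one
  have hS0 := rpow_mul_D1_nonneg γ 1
  refine ⟨fun hγ => ?_, fun ⟨hγ1, hγ2⟩ => ?_, fun hγ => ?_, fun hγ => ?_⟩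
  · exact isBigTheta_W (isTheta_sum_rpow_of_lt_neg_one (by linarith))
      (hS.sum_Icc_of_lt_neg_one hS0 (by linarith)) (by ring) (by ring) powLog_one_zero
  · exact isBigTheta_W (isTheta_sum_rpow_of_lt_neg_one (by linarith))
      (hS.sum_Icc_of_neg_one_lt hS0 (by linarith)) (by ring) (by ring) (powLog_neg_one_right _)
  · subst hγ
    exact isBigTheta_W (isTheta_sum_rpow_of_eq_neg_one rfl)
      (hS.sum_Icc_of_neg_one_lt hS0 (by norm_num)) (by ring) (by ring) powLog_two_neg_two
  · exact isBigTheta_W (isTheta_sum_rpow_of_neg_one_lt (by linarith))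
      (hS.sum_Icc_of_neg_one_lt hS0 (by linarith)) (by ring) (by ring) powLog_two_neg_one

theorem isBigTheta_W_of_lt_one (γ : ℝ) (hφ : φ < 1) :
    (2 < γ → IsBigTheta (fun n => W γ φ n) (fun n => (n : ℝ))) ∧
    (γ = 2 → IsBigTheta (fun n => W γ φ n) (fun n => (n : ℝ) * Real.log n)) ∧
    (1 < γ ∧ γ < 2 → IsBigTheta (fun n => W γ φ n) (fun n => (n : ℝ) ^ (3 - γ))) ∧
    (γ = 1 → IsBigTheta (fun n => W γ φ n) (fun n => (n : ℝ) ^ 2 / Real.log n)) ∧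
    (γ < 1 → IsBigTheta (fun n => W γ φ n) (fun n => (n : ℝ) ^ 2)) := by
  have hS := isTheta_rpow_mul_D1 (γ := γ) (isTheta_D1_of_lt_one hφ)
  have hS0 := rpow_mul_D1_nonneg γ φ
  refine ⟨fun hγ => ?_, fun hγ => ?_, fun ⟨hγ1, hγ2⟩ => ?_, fun hγ => ?_,
    fun hγ => ?_⟩
  · exact isBigTheta_W (isTheta_sum_rpow_of_lt_neg_one (by linarith))
      (hS.sum_Icc_of_lt_neg_one hS0 (by linarith)) (by ring) (by ring) powLog_one_zero
  · exact isBigTheta_W (isTheta_sum_rpow_of_lt_neg_one (by linarith))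
      (hS.sum_Icc_of_eq_neg_one hS0 (by linarith) (by norm_num)) (by ring) (by ring) powLog_one_one
  · exact isBigTheta_W (isTheta_sum_rpow_of_lt_neg_one (by linarith))
      (hS.sum_Icc_of_neg_one_lt hS0 (by linarith)) (by ring) (by ring) (powLog_zero_right _)
  · subst hγ
    exact isBigTheta_W (isTheta_sum_rpow_of_eq_neg_one rfl)
      (hS.sum_Icc_of_neg_one_lt hS0 (by norm_num)) (by ring) (by ring) powLog_two_neg_one
  · exact isBigTheta_W (isTheta_sum_rpow_of_neg_one_lt (by linarith))
      (hS.sum_Icc_of_neg_one_lt hS0 (by linarith)) (by ring) (by ring) powLog_two_zero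

end Regimes

theorem expected_total_destinations_order_general (γ φ : ℝ) :
    (2 < φ → IsBigTheta (fun n => W γ φ n) (fun n => (n : ℝ))) ∧
    (φ = 2 →
      (1 < γ → IsBigTheta (fun n => W γ φ n) (fun n => (n : ℝ))) ∧
      (γ ≤ 1 → IsBigTheta (fun n => W γ φ n) (fun n => (n : ℝ) * Real.log n))) ∧
    (1 < φ ∧ φ < 2 →
      (3 - φ < γ → IsBigTheta (fun n => W γ φ n) (fun n => (n : ℝ))) ∧
      (γ = 3 - φ → IsBigTheta (fun n => W γ φ n) (fun n => (n : ℝ) * Real.log n)) ∧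
      (1 < γ ∧ γ < 3 - φ →
        IsBigTheta (fun n => W γ φ n) (fun n => (n : ℝ) ^ (4 - γ - φ))) ∧
      (γ = 1 → IsBigTheta (fun n => W γ φ n) (fun n => (n : ℝ) ^ (3 - φ) / Real.log n)) ∧
      (γ < 1 → IsBigTheta (fun n => W γ φ n) (fun n => (n : ℝ) ^ (3 - φ)))) ∧
    (φ = 1 →
      (2 < γ → IsBigTheta (fun n => W γ φ n) (fun n => (n : ℝ))) ∧
      (1 < γ ∧ γ < 2 →
        IsBigTheta (fun n => W γ φ n) (fun n => (n : ℝ) ^ (3 - γ) / Real.log n)) ∧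
      (γ = 1 → IsBigTheta (fun n => W γ φ n) (fun n => (n : ℝ) ^ 2 / Real.log n ^ 2)) ∧
      (γ < 1 → IsBigTheta (fun n => W γ φ n) (fun n => (n : ℝ) ^ 2 / Real.log n))) ∧
    (φ < 1 →
      (2 < γ → IsBigTheta (fun n => W γ φ n) (fun n => (n : ℝ))) ∧
      (γ = 2 → IsBigTheta (fun n => W γ φ n) (fun n => (n : ℝ) * Real.log n)) ∧
      (1 < γ ∧ γ < 2 → IsBigTheta (fun n => W γ φ n) (fun n => (n : ℝ) ^ (3 - γ))) ∧
      (γ = 1 → IsBigTheta (fun n => W γ φ n) (fun n => (n : ℝ) ^ 2 / Real.log n)) ∧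
      (γ < 1 → IsBigTheta (fun n => W γ φ n) (fun n => (n : ℝ) ^ 2))) := by
  refine ⟨isBigTheta_W_of_two_lt γ, ?_,
    fun ⟨h1, h2⟩ => isBigTheta_W_of_one_lt_of_lt_two γ h1 h2, ?_, isBigTheta_W_of_lt_one γ⟩
  · rintro rfl
    exact isBigTheta_W_two γ
  · rintro rfl
    exact isBigTheta_W_one γ

theorem expected_total_destinations_order (γ φ : ℝ) (hγ : 0 ≤ γ) (hφ : 0 ≤ φ) :
    (2 < φ → IsBigTheta (fun n => W γ φ n) (fun n => (n : ℝ))) ∧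
    (φ = 2 →
      (1 < γ → IsBigTheta (fun n => W γ φ n) (fun n => (n : ℝ))) ∧
      (γ ≤ 1 → IsBigTheta (fun n => W γ φ n) (fun n => (n : ℝ) * Real.log n))) ∧
    (1 < φ ∧ φ < 2 →
      (3 - φ < γ → IsBigTheta (fun n => W γ φ n) (fun n => (n : ℝ))) ∧
      (γ = 3 - φ → IsBigTheta (fun n => W γ φ n) (fun n => (n : ℝ) * Real.log n)) ∧
      (1 < γ ∧ γ < 3 - φ →
        IsBigTheta (fun n => W γ φ n) (fun n => (n : ℝ) ^ (4 - γ - φ))) ∧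
      (γ = 1 → IsBigTheta (fun n => W γ φ n) (fun n => (n : ℝ) ^ (3 - φ) / Real.log n)) ∧
      (γ < 1 → IsBigTheta (fun n => W γ φ n) (fun n => (n : ℝ) ^ (3 - φ)))) ∧
    (φ = 1 →
      (2 < γ → IsBigTheta (fun n => W γ φ n) (fun n => (n : ℝ))) ∧
      (1 < γ ∧ γ < 2 →
        IsBigTheta (fun n => W γ φ n) (fun n => (n : ℝ) ^ (3 - γ) / Real.log n)) ∧
      (γ = 1 → IsBigTheta (fun n => W γ φ n) (fun n => (n : ℝ) ^ 2 / Real.log n ^ 2)) ∧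
      (γ < 1 → IsBigTheta (fun n => W γ φ n) (fun n => (n : ℝ) ^ 2 / Real.log n))) ∧
    (φ < 1 →
      (2 < γ → IsBigTheta (fun n => W γ φ n) (fun n => (n : ℝ))) ∧
      (γ = 2 → IsBigTheta (fun n => W γ φ n) (fun n => (n : ℝ) * Real.log n)) ∧
      (1 < γ ∧ γ < 2 → IsBigTheta (fun n => W γ φ n) (fun n => (n : ℝ) ^ (3 - γ))) ∧
      (γ = 1 → IsBigTheta (fun n => W γ φ n) (fun n => (n : ℝ) ^ 2 / Real.log n)) ∧
      (γ < 1 → IsBigTheta (fun n => W γ φ n) (fun n => (n : ℝ) ^ 2))) :=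
  expected_total_destinations_order_general γ φ
end
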